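/- Let [a₁b₁] and [a₂b₂] be two segments of length 2l in the Euclidean plane ℝ², let mᵢ be the midpoint of [aᵢbᵢ], and assume m₁ ≠ m₂ and that a₁ and a₂ lie in the same closed half-plane bounded by the line through m₁ and m₂. Let αᵢ denote the angle between the vector from m₁ to m₂ and the vector from aᵢ to bᵢ, and set δ = α₂ − α₁. If the two segments are disjoint, then |sin δ| < dist(m₁, m₂)/l. -/

import Mathlib

/-!
Write `e = m₂ - m₁`, `wᵢ = bᵢ - aᵢ` and let `ω` be the area form of the plane, so that
`sin αᵢ · ‖e‖ ‖wᵢ‖ = |ω e wᵢ|` and `cos αᵢ · ‖e‖ ‖wᵢ‖ = ⟪e, wᵢ⟫`. The half-plane condition makes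
`ω e w₁` and `ω e w₂` of the same sign, so the identity
`⟪e, w₁⟫ ω e w₂ - ω e w₁ ⟪e, w₂⟫ = ‖e‖² ω w₁ w₂` turns into `|sin δ| · 4l² = |ω w₁ w₂|`.
If `dist m₁ m₂ ≤ l |sin δ|`, then `2 |ω e wᵢ| ≤ 2l ‖e‖ ≤ |ω w₁ w₂|`, and Cramer's rule
`ω w₁ w₂ • e = ω e w₂ • w₁ - ω e w₁ • w₂` exhibits the common point
`m₁ + (ω e w₂ / ω w₁ w₂) • w₁ = m₂ + (ω e w₁ / ω w₁ w₂) • w₂` of the two segments.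
-/

open Module RealInnerProductSpace InnerProductGeometry

theorem midpoint_add_smul_sub_mem_segment {E : Type*} [AddCommGroup E] [Module ℝ E]
    (a b : E) {t : ℝ} (ht : |t| ≤ 1 / 2) :
    midpoint ℝ a b + t • (b - a) ∈ segment ℝ a b := by
  rw [segment_eq_image']
  refine ⟨1 / 2 + t, ?_, ?_⟩
  · rw [abs_le] at ht
    constructor <;> linarith
  · simp only [midpoint_eq_smul_add, invOf_eq_inv]
    module

namespace Orientation

variable {V : Type*} [NormedAddCommGroup V] [InnerProductSpace ℝ V] [Fact (finrank ℝ V = 2)]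
  (o : Orientation ℝ V (Fin 2))

local notation "ω" => o.areaForm
local notation "J" => o.rightAngleRotation

theorem abs_areaForm_eq_sin_angle_mul_norm_mul_norm (x y : V) :
    |ω x y| = Real.sin (angle x y) * (‖x‖ * ‖y‖) := by
  have h := o.inner_sq_add_areaForm_sq x y
  rw [sin_angle_mul_norm_mul_norm, real_inner_self_eq_norm_sq, real_inner_self_eq_norm_sq,
    ← Real.sqrt_sq_eq_abs]
  congr 1
  linarith

theorem abs_sin_angle_sub_angle_mul_norm_mul_norm {e x y : V} (he : e ≠ 0)
    (hxy : 0 ≤ ω e x * ω e y) :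
    |Real.sin (angle e y - angle e x)| * (‖x‖ * ‖y‖) = |ω x y| := by
  have he2 : 0 < ‖e‖ ^ 2 := by positivity
  have hsin (z : V) : Real.sin (angle e z) * (‖e‖ * ‖z‖) = |ω e z| :=
    (o.abs_areaForm_eq_sin_angle_mul_norm_mul_norm e z).symm
  have hexpand : Real.sin (angle e y - angle e x) * (‖x‖ * ‖y‖) * ‖e‖ ^ 2 =
      |ω e y| * ⟪e, x⟫ - ⟪e, y⟫ * |ω e x| := by
    rw [Real.sin_sub, ← hsin, ← hsin, ← cos_angle_mul_norm_mul_norm,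
      ← cos_angle_mul_norm_mul_norm]
    ring
  have hsign : |(|ω e y| * ⟪e, x⟫ - ⟪e, y⟫ * |ω e x|)| = |⟪e, x⟫ * ω e y - ω e x * ⟪e, y⟫| := by
    rcases mul_nonneg_iff.mp hxy with ⟨hx, hy⟩ | ⟨hx, hy⟩
    · rw [abs_of_nonneg hx, abs_of_nonneg hy]
      ring_nf
    · rw [abs_of_nonpos hx, abs_of_nonpos hy, ← abs_neg]
      ring_nf
  rw [o.inner_mul_areaForm_sub, ← hexpand, abs_mul, abs_mul, abs_mul, abs_of_pos he2,
    abs_norm, abs_norm, abs_mul, abs_of_pos he2] at hsign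
  exact mul_right_cancel₀ he2.ne' (by linarith)

theorem norm_sq_smul_eq_inner_smul_add_areaForm_smul (a x : V) :
    ‖a‖ ^ 2 • x = ⟪a, x⟫ • a + ω a x • J a := by
  refine ext_inner_right ℝ fun y => ?_
  rw [real_inner_smul_left, inner_add_left, real_inner_smul_left, real_inner_smul_left,
    inner_rightAngleRotation_left, o.inner_mul_inner_add_areaForm_mul_areaForm]

theorem areaForm_mul_areaForm_nonneg_of_apply_mul_apply_nonneg {f : V →ₗ[ℝ] ℝ} (hf : f ≠ 0)
    {e x y : V} (hfe : f e = 0) (hfxy : 0 ≤ f x * f y) : 0 ≤ ω e x * ω e y := by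
  -- the kernel of `f` is the line through `e`, on which `ω e` also vanishes
  have hfz (z : V) : ‖e‖ ^ 2 * f z = ω e z * f (J e) := by
    simpa [hfe] using congr_arg f (o.norm_sq_smul_eq_inner_smul_add_areaForm_smul e z)
  by_cases he : e = 0
  · simp [he]
  have hJe : f (J e) ≠ 0 := by
    refine fun h => hf (LinearMap.ext fun z => ?_)
    have := hfz z
    rw [h, mul_zero] at this
    simpa [he] using this
  have key : ‖e‖ ^ 4 * (f x * f y) = (ω e x * ω e y) * f (J e) ^ 2 := by
    linear_combination (‖e‖ ^ 2 * f y) * hfz x + (ω e x * f (J e)) * hfz y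
  have : 0 ≤ (ω e x * ω e y) * f (J e) ^ 2 := key ▸ by positivity
  exact nonneg_of_mul_nonneg_left this (by positivity)

theorem areaForm_smul_eq_areaForm_smul_sub_areaForm_smul (e x y : V) :
    ω x y • e = ω e y • x - ω e x • y := by
  by_cases hx : x = 0
  · simp [hx]
  have hx2 : ‖x‖ ^ 2 ≠ 0 := by positivity
  have he := o.norm_sq_smul_eq_inner_smul_add_areaForm_smul x e
  have hy := o.norm_sq_smul_eq_inner_smul_add_areaForm_smul x y
  have hcross := o.inner_mul_areaForm_sub x e y
  refine smul_right_injective V hx2 ?_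
  calc ‖x‖ ^ 2 • ω x y • e = ω x y • (⟪x, e⟫ • x + ω x e • J x) := by rw [← he, smul_comm]
    _ = (ω e y * ‖x‖ ^ 2) • x - ω e x • (⟪x, y⟫ • x + ω x y • J x) := by
      rw [o.areaForm_swap e x]
      linear_combination (norm := module) hcross • x
    _ = ‖x‖ ^ 2 • (ω e y • x - ω e x • y) := by rw [← hy]; module

theorem areaForm_mul_areaForm_nonneg_of_sameSide {f : V →ₗ[ℝ] ℝ} (hf : f ≠ 0) {a₁ b₁ a₂ b₂ : V}
    (he : f (midpoint ℝ a₂ b₂ - midpoint ℝ a₁ b₁) = 0) (h₁ : 0 ≤ f (a₁ - midpoint ℝ a₁ b₁))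
    (h₂ : 0 ≤ f (a₂ - midpoint ℝ a₁ b₁)) :
    0 ≤ ω (midpoint ℝ a₂ b₂ - midpoint ℝ a₁ b₁) (b₁ - a₁) *
      ω (midpoint ℝ a₂ b₂ - midpoint ℝ a₁ b₁) (b₂ - a₂) := by
  refine o.areaForm_mul_areaForm_nonneg_of_apply_mul_apply_nonneg hf he
    (mul_nonneg_of_nonpos_of_nonpos ?_ ?_)
  · rw [left_sub_midpoint, map_smul, smul_eq_mul, invOf_eq_inv, map_sub] at h₁
    rw [map_sub]
    linarith
  · rw [← sub_add_sub_cancel a₂ (midpoint ℝ a₂ b₂), map_add, he, add_zero, left_sub_midpoint,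
      map_smul, smul_eq_mul, invOf_eq_inv, map_sub] at h₂
    rw [map_sub]
    linarith

theorem segment_inter_nonempty_of_two_mul_abs_areaForm_le {a₁ b₁ a₂ b₂ : V}
    (hK : ω (b₁ - a₁) (b₂ - a₂) ≠ 0)
    (h₁ : 2 * |ω (midpoint ℝ a₂ b₂ - midpoint ℝ a₁ b₁) (b₁ - a₁)| ≤ |ω (b₁ - a₁) (b₂ - a₂)|)
    (h₂ : 2 * |ω (midpoint ℝ a₂ b₂ - midpoint ℝ a₁ b₁) (b₂ - a₂)| ≤ |ω (b₁ - a₁) (b₂ - a₂)|) :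
    (segment ℝ a₁ b₁ ∩ segment ℝ a₂ b₂).Nonempty := by
  set e := midpoint ℝ a₂ b₂ - midpoint ℝ a₁ b₁
  set K := ω (b₁ - a₁) (b₂ - a₂)
  have hK' : 0 < |K| := abs_pos.mpr hK
  have ht (S : ℝ) (hS : 2 * |S| ≤ |K|) : |S / K| ≤ 1 / 2 := by
    rw [abs_div, div_le_iff₀ hK']
    linarith
  refine ⟨midpoint ℝ a₁ b₁ + (ω e (b₂ - a₂) / K) • (b₁ - a₁),
    midpoint_add_smul_sub_mem_segment a₁ b₁ (ht _ h₂), ?_⟩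
  convert midpoint_add_smul_sub_mem_segment a₂ b₂ (ht _ h₁) using 1
  have he : midpoint ℝ a₂ b₂ - midpoint ℝ a₁ b₁ =
      (ω e (b₂ - a₂) / K) • (b₁ - a₁) - (ω e (b₁ - a₁) / K) • (b₂ - a₂) := by
    rw [div_eq_inv_mul, div_eq_inv_mul, mul_smul, mul_smul, ← smul_sub,
      ← o.areaForm_smul_eq_areaForm_smul_sub_areaForm_smul, smul_smul, inv_mul_cancel₀ hK,
      one_smul]
  linear_combination (norm := module) -he

end Orientation

/-- Second part of Lemma 1 (Lemma `L_ap`) of "Polyhedra with simple dense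
geodesics": if two segments of length `2l` in the Euclidean plane, with
distinct midpoints `m₁ ≠ m₂` and with `a₁`, `a₂` in the same closed
half-plane bounded by the line through `m₁` and `m₂`, are disjoint, then
`|sin δ| < dist m₁ m₂ / l`. -/
theorem sin_lt_of_segments_disjoint
    (l : ℝ) (hl : 0 < l)
    (a₁ b₁ a₂ b₂ m₁ m₂ : EuclideanSpace ℝ (Fin 2))
    (hm₁ : m₁ = midpoint ℝ a₁ b₁) (hm₂ : m₂ = midpoint ℝ a₂ b₂)
    (hlen₁ : dist a₁ b₁ = 2 * l) (hlen₂ : dist a₂ b₂ = 2 * l)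
    (hm : m₁ ≠ m₂)
    (hhalf : ∃ f : EuclideanSpace ℝ (Fin 2) →L[ℝ] ℝ,
      f ≠ 0 ∧ f (m₂ - m₁) = 0 ∧ 0 ≤ f (a₁ - m₁) ∧ 0 ≤ f (a₂ - m₁))
    (α₁ α₂ δ : ℝ)
    (hα₁ : α₁ = InnerProductGeometry.angle (m₂ - m₁) (b₁ - a₁))
    (hα₂ : α₂ = InnerProductGeometry.angle (m₂ - m₁) (b₂ - a₂))
    (hδ : δ = α₂ - α₁)
    (hdisj : segment ℝ a₁ b₁ ∩ segment ℝ a₂ b₂ = ∅) :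
    |Real.sin δ| < dist m₁ m₂ / l := by
  obtain ⟨f, hf0, hfe, hfa₁, hfa₂⟩ := hhalf
  subst hm₁ hm₂ hα₁ hα₂ hδ
  have : Fact (finrank ℝ (EuclideanSpace ℝ (Fin 2)) = 2) := ⟨finrank_euclideanSpace_fin⟩
  let o : Orientation ℝ (EuclideanSpace ℝ (Fin 2)) (Fin 2) :=
    (EuclideanSpace.basisFun (Fin 2) ℝ).toBasis.orientation
  have hw₁ : ‖b₁ - a₁‖ = 2 * l := by rw [← dist_eq_norm', hlen₁]
  have hw₂ : ‖b₂ - a₂‖ = 2 * l := by rw [← dist_eq_norm', hlen₂]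
  have hsign := o.areaForm_mul_areaForm_nonneg_of_sameSide (f := f.toLinearMap)
    (fun h => hf0 (ContinuousLinearMap.coe_injective h)) hfe hfa₁ hfa₂
  have hK := o.abs_sin_angle_sub_angle_mul_norm_mul_norm (sub_ne_zero.mpr hm.symm) hsign
  rw [hw₁, hw₂] at hK
  by_contra! hlt
  rw [div_le_iff₀ hl] at hlt
  have hd := dist_pos.mpr hm
  have hbound {w} (hw : ‖w‖ = 2 * l) :
      2 * |o.areaForm (midpoint ℝ a₂ b₂ - midpoint ℝ a₁ b₁) w| ≤
        |o.areaForm (b₁ - a₁) (b₂ - a₂)| := by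
    have := o.abs_areaForm_le (midpoint ℝ a₂ b₂ - midpoint ℝ a₁ b₁) w
    rw [← dist_eq_norm', hw] at this
    nlinarith
  have hK0 : o.areaForm (b₁ - a₁) (b₂ - a₂) ≠ 0 := by
    rw [← abs_pos, ← hK]
    nlinarith
  exact (o.segment_inter_nonempty_of_two_mul_abs_areaForm_le hK0 (hbound hw₁)
    (hbound hw₂)).ne_empty hdisj
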